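/- Let μ₀ ∈ C²([0,∞)). Then for all x ∈ ℝ³∖{0} and v ∈ ℝ³ (with r=|x|, w=(x·v)/r) the iterated Poisson bracket satisfies {E, {E, rw}} = −γ e^{2μ₀(r)} w ( r μ₀''(r) + μ₀'(r) + 2μ₀'(r)/⟨v⟩² ), where rw = x·v. -/

import Mathlib

noncomputable section

open Real MeasureTheory

abbrev E3 := EuclideanSpace ℝ (Fin 3)

/-- Euclidean dot product on `E3`. -/
def dot3 (x v : E3) : ℝ := ∑ i, x i * v i

/-- `⟨v⟩ = √(1+γ|v|²)`. -/
def jap (γ : ℝ) (v : E3) : ℝ := Real.sqrt (1 + γ * ‖v‖ ^ 2)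

/-- The radial momentum `w = (x·v)/|x|`. -/
def wrad (x v : E3) : ℝ := dot3 x v / ‖x‖

/-- The particle energy `E(x,v) = e^{μ₀(|x|)}⟨v⟩`. -/
def energy (γ : ℝ) (μ₀ : ℝ → ℝ) (z : E3 × E3) : ℝ :=
  Real.exp (μ₀ ‖z.1‖) * jap γ z.2

/-- The Poisson bracket `{f,g} = ∂ₓf·∂ᵥg − ∂ᵥf·∂ₓg`. -/
def pb (f g : E3 × E3 → ℝ) (z : E3 × E3) : ℝ :=
  ∑ i : Fin 3,
    (fderiv ℝ f z (EuclideanSpace.single i 1, 0) * fderiv ℝ g z (0, EuclideanSpace.single i 1)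
     - fderiv ℝ f z (0, EuclideanSpace.single i 1) * fderiv ℝ g z (EuclideanSpace.single i 1, 0))

/-- Action of a `3×3` matrix on `E3`. -/
def matAct (A : Matrix (Fin 3) (Fin 3) ℝ) (x : E3) : E3 :=
  (WithLp.equiv 2 (Fin 3 → ℝ)).symm (A.mulVec ((WithLp.equiv 2 (Fin 3 → ℝ)) x))

/-- Spherical symmetry: invariance under the canonical action of SO(3). -/
def SphSym (h : E3 × E3 → ℝ) : Prop :=
  ∀ A : Matrix (Fin 3) (Fin 3) ℝ, A ∈ Matrix.orthogonalGroup (Fin 3) ℝ → A.det = 1 →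
    ∀ x v : E3, h (matAct A x, matAct A v) = h (x, v)

/-- Radial unit vector, used to define radial representatives of
spherically symmetric quantities. -/
def er : E3 := EuclideanSpace.single 0 1

/-- The steady state distribution `f₀ = φ(E)`. -/
def f0 (γ : ℝ) (μ₀ φ : ℝ → ℝ) : E3 × E3 → ℝ := fun z => φ (energy γ μ₀ z)

/-!
Near a point `(x, v)` with `x ≠ 0`, every function in sight is a sum of products
`P(|x|) Q(⟨v⟩)`, so its differential has gradient `(a x, b v)` for scalars `a, b`.
For gradients `(a x, b v)` and `(c x, d v)` the bracket is `(a d - b c) x·v`, and against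
`x·v`, whose gradient is `(v, x)`, it is `a |x|² - b |v|²`. The second rule expresses
`{E, x·v}` through `|x|` and `⟨v⟩` alone, so the first rule applies once more.
-/

open scoped RealInnerProductSpace Topology

section InnerProductSpace

variable {F : Type*} [NormedAddCommGroup F] [InnerProductSpace ℝ F]

theorem hasFDerivAt_norm_of_ne_zero {x : F} (hx : x ≠ 0) :
    HasFDerivAt (fun y : F => ‖y‖) (‖x‖⁻¹ • innerSL ℝ x) x := by
  have hr : ‖x‖ ≠ 0 := norm_ne_zero_iff.mpr hx
  have h := (Real.hasDerivAt_sqrt (pow_ne_zero 2 hr)).comp_hasFDerivAt x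
    (hasStrictFDerivAt_norm_sq x).hasFDerivAt
  simp only [Function.comp_def, Real.sqrt_sq (norm_nonneg _)] at h
  refine h.congr_fderiv ?_
  ext u
  simp only [one_div, mul_inv_rev, two_smul, smul_add, add_apply,
    smul_apply, coe_innerSL_apply, smul_eq_mul]
  field_simp
  ring

def gradCLM (p q : F) : F × F →L[ℝ] ℝ :=
  (innerSL ℝ p).comp (ContinuousLinearMap.fst ℝ F F) +
    (innerSL ℝ q).comp (ContinuousLinearMap.snd ℝ F F)

@[simp]
theorem gradCLM_apply (p q : F) (h : F × F) : gradCLM p q h = ⟪p, h.1⟫ + ⟪q, h.2⟫ := by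
  simp [gradCLM]

theorem gradCLM_add (p q p' q' : F) : gradCLM p q + gradCLM p' q' = gradCLM (p + p') (q + q') := by
  ext h <;> simp [inner_add_left]

theorem hasFDerivAt_inner_fst_snd (x v : F) :
    HasFDerivAt (fun z : F × F => ⟪z.1, z.2⟫) (gradCLM v x) (x, v) := by
  refine (hasFDerivAt_fst.inner ℝ hasFDerivAt_snd).congr_fderiv ?_
  ext h <;> simp [fderivInnerCLM_apply, real_inner_comm]

end InnerProductSpace

theorem dot3_eq_inner (x v : E3) : dot3 x v = ⟪x, v⟫ := by
  simp [dot3, PiLp.inner_apply, mul_comm]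

theorem pb_eq_of_hasFDerivAt_gradCLM {f g : E3 × E3 → ℝ} {z : E3 × E3} {p₁ q₁ p₂ q₂ : E3}
    (hf : HasFDerivAt f (gradCLM p₁ q₁) z) (hg : HasFDerivAt g (gradCLM p₂ q₂) z) :
    pb f g z = ⟪p₁, q₂⟫ - ⟪q₁, p₂⟫ := by
  simp [pb, hf.fderiv, hg.fderiv, PiLp.inner_apply, Finset.sum_sub_distrib, mul_comm]

theorem pb_congr_right {f g g' : E3 × E3 → ℝ} {z : E3 × E3} (h : g =ᶠ[𝓝 z] g') :
    pb f g z = pb f g' z := by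
  simp only [pb, h.fderiv_eq]

section

variable {γ : ℝ}

theorem jap_pos (hγ : 0 ≤ γ) (v : E3) : 0 < jap γ v :=
  Real.sqrt_pos.mpr (by positivity)

theorem jap_sq (hγ : 0 ≤ γ) (v : E3) : jap γ v ^ 2 = 1 + γ * ‖v‖ ^ 2 :=
  Real.sq_sqrt (by positivity)

theorem hasFDerivAt_jap (hγ : 0 ≤ γ) (v : E3) :
    HasFDerivAt (jap γ) ((γ / jap γ v) • innerSL ℝ v) v := by
  have h := (Real.hasDerivAt_sqrt (by positivity : 1 + γ * ‖v‖ ^ 2 ≠ 0)).comp_hasFDerivAt v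
    (((hasStrictFDerivAt_norm_sq v).hasFDerivAt.const_mul γ).const_add 1)
  refine h.congr_fderiv ?_
  ext u
  have hJ := (jap_pos hγ v).ne'
  simp only [jap] at hJ ⊢
  simp only [one_div, mul_inv_rev, smul_apply, coe_innerSL_apply,
    nsmul_eq_mul, Nat.cast_ofNat, smul_eq_mul]
  field_simp

theorem hasFDerivAt_mul_norm_jap (hγ : 0 ≤ γ) {p q : ℝ → ℝ} {p' q' : ℝ} {x : E3} (v : E3)
    (hx : x ≠ 0) (hp : HasDerivAt p p' ‖x‖) (hq : HasDerivAt q q' (jap γ v)) :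
    HasFDerivAt (fun z : E3 × E3 => p ‖z.1‖ * q (jap γ z.2))
      (gradCLM ((q (jap γ v) * p' / ‖x‖) • x) ((p ‖x‖ * q' * γ / jap γ v) • v)) (x, v) := by
  have hP := (hp.comp_hasFDerivAt x (hasFDerivAt_norm_of_ne_zero hx)).comp (x, v)
    (hasFDerivAt_fst (𝕜 := ℝ) (p := (x, v)))
  have hQ := (hq.comp_hasFDerivAt v (hasFDerivAt_jap hγ v)).comp (x, v)
    (hasFDerivAt_snd (𝕜 := ℝ) (p := (x, v)))
  refine (hP.mul hQ).congr_fderiv ?_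
  ext h <;> simp [inner_smul_left] <;> ring

theorem hasFDerivAt_energy (hγ : 0 ≤ γ) {μ : ℝ → ℝ} {x : E3} (v : E3) (hx : x ≠ 0)
    (hμ : DifferentiableAt ℝ μ ‖x‖) :
    HasFDerivAt (energy γ μ)
      (gradCLM ((exp (μ ‖x‖) * deriv μ ‖x‖ * jap γ v / ‖x‖) • x)
        ((exp (μ ‖x‖) * γ / jap γ v) • v)) (x, v) := by
  refine (hasFDerivAt_mul_norm_jap hγ v hx hμ.hasDerivAt.exp (hasDerivAt_id' _)).congr_fderiv ?_
  congr 2 <;> ring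

/-- `{E, x·v}` away from `x = 0`, written in terms of `r` and `⟨v⟩` using `γ|v|² = ⟨v⟩² - 1`. -/
def bracketEnergyDot (γ : ℝ) (μ : ℝ → ℝ) (z : E3 × E3) : ℝ :=
  exp (μ ‖z.1‖) * (‖z.1‖ * deriv μ ‖z.1‖ - 1) * jap γ z.2 + exp (μ ‖z.1‖) * (jap γ z.2)⁻¹

theorem pb_energy_dot (hγ : 0 ≤ γ) {μ : ℝ → ℝ} {x : E3} (v : E3) (hx : x ≠ 0)
    (hμ : DifferentiableAt ℝ μ ‖x‖) :
    pb (energy γ μ) (fun z => dot3 z.1 z.2) (x, v) = bracketEnergyDot γ μ (x, v) := by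
  simp only [dot3_eq_inner]
  rw [pb_eq_of_hasFDerivAt_gradCLM (hasFDerivAt_energy hγ v hx hμ) (hasFDerivAt_inner_fst_snd x v)]
  have hr : ‖x‖ ≠ 0 := norm_ne_zero_iff.mpr hx
  have hJ := (jap_pos hγ v).ne'
  simp only [bracketEnergyDot, inner_smul_left, real_inner_self_eq_norm_sq, RCLike.conj_to_real]
  field_simp
  linear_combination jap_sq hγ v

theorem hasFDerivAt_bracketEnergyDot (hγ : 0 ≤ γ) {μ : ℝ → ℝ} {x : E3} (v : E3) (hx : x ≠ 0)
    (hμ : ContDiff ℝ 2 μ) :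
    HasFDerivAt (bracketEnergyDot γ μ)
      (gradCLM ((exp (μ ‖x‖) * (jap γ v * (deriv μ ‖x‖ ^ 2 + deriv (deriv μ) ‖x‖)
          + deriv μ ‖x‖ / (‖x‖ * jap γ v))) • x)
        ((exp (μ ‖x‖) * γ * (‖x‖ * deriv μ ‖x‖ - 1 - (jap γ v ^ 2)⁻¹) / jap γ v) • v)) (x, v) := by
  have hr : ‖x‖ ≠ 0 := norm_ne_zero_iff.mpr hx
  have hJ := (jap_pos hγ v).ne'
  have hexp := ((hμ.differentiable two_ne_zero) ‖x‖).hasDerivAt.exp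
  have hμ' := ((hμ.differentiable_deriv_two) ‖x‖).hasDerivAt
  have h₁ := hasFDerivAt_mul_norm_jap hγ v hx
    (hexp.mul (((hasDerivAt_id' _).mul hμ').sub_const 1)) (hasDerivAt_id' _)
  have h₂ := hasFDerivAt_mul_norm_jap hγ v hx hexp (hasDerivAt_inv hJ)
  have h := h₁.add h₂
  rw [gradCLM_add, ← add_smul, ← add_smul] at h
  refine h.congr_fderiv ?_
  simp only [Pi.mul_apply]
  congr 2 <;> field_simp <;> ring

end

/-- second identity of Lemma 4.4:
`{E, {E, rw}} = −γ e^{2μ₀} w ( r μ₀'' + μ₀' + 2μ₀'/⟨v⟩² )`. -/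
theorem bracket_E_bracket_E_rw
    (γ : ℝ) (hγ : 0 < γ)
    (mu0 : ℝ → ℝ) (hmu0 : ContDiff ℝ 2 mu0)
    (x : E3) (hx : x ≠ 0) (v : E3) :
    pb (energy γ mu0) (pb (energy γ mu0) (fun z => dot3 z.1 z.2)) (x, v) =
      -γ * Real.exp (2 * mu0 ‖x‖) * wrad x v *
        (‖x‖ * deriv (deriv mu0) ‖x‖ + deriv mu0 ‖x‖
          + 2 * deriv mu0 ‖x‖ / (jap γ v) ^ 2) := by
  have hμ := hmu0.differentiable two_ne_zero
  have hbracket : pb (energy γ mu0) (fun z => dot3 z.1 z.2) =ᶠ[𝓝 (x, v)] bracketEnergyDot γ mu0 :=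
    (continuous_fst.continuousAt.eventually (eventually_ne_nhds hx)).mono fun z hz =>
      pb_energy_dot hγ.le z.2 hz (hμ _)
  rw [pb_congr_right hbracket, pb_eq_of_hasFDerivAt_gradCLM (hasFDerivAt_energy hγ.le v hx (hμ _))
    (hasFDerivAt_bracketEnergyDot hγ.le v hx hmu0)]
  have hr : ‖x‖ ≠ 0 := norm_ne_zero_iff.mpr hx
  have hJ := (jap_pos hγ.le v).ne'
  simp only [inner_smul_left, inner_smul_right, real_inner_comm x v, RCLike.conj_to_real]
  rw [wrad, dot3_eq_inner, two_mul, exp_add]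
  field_simp
  ring
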